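/- arXiv:2103.08278 — 9 statements merged into one kernel-verified Lean document; each statement's English description precedes it below -/
import Mathlib

section
/- Let R be an NP-ring. An R-module M is nonnil-injective (Ext¹_R(T,M) = 0 for every φ-torsion module T) if and only if Ext¹_R(R/I, M) = 0 for every nonnil ideal I of R. -/
/-!
`Ext¹(X, M) = 0` exactly when, for one (equivalently every) projective presentation
`0 → K → P → X → 0`, every linear map `K → M` extends to `P`; for `R ⧸ I` take `I → R → R ⧸ I`.
If `T` is φ-torsion and `P ↠ T`, every `x ∈ P` is pushed into `K` by a nonnil ideal, and Baer's
Zorn argument extends maps `K → M` to `P` using only extensions of maps from nonnil ideals to `R`: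
at a maximal partial extension with domain `D`, the colon ideal `(D : x)` contains an ideal pushing
`x` into `K`, so it is again nonnil, as nonnil ideals form an upper set.
-/

open CategoryTheory

/-- An `R`-module is φ-torsion if every element is annihilated by some nonnil ideal. -/
def IsPhiTorsion (R : Type*) [CommRing R] (M : Type*) [AddCommGroup M] [Module R M] : Prop :=
  ∀ x : M, ∃ I : Ideal R, ¬ I ≤ nilradical R ∧ ∀ a ∈ I, a • x = 0

section LinearAlgebra

variable {R : Type*} [Ring R] {A B X M : Type*} [AddCommGroup A] [Module R A]
  [AddCommGroup B] [Module R B] [AddCommGroup X] [Module R X] [AddCommGroup M] [Module R M]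

def Submodule.LinearMapsExtend (K : Submodule R B) (M : Type*) [AddCommGroup M] [Module R M] :
    Prop :=
  ∀ f : K →ₗ[R] M, ∃ g : B →ₗ[R] M, g ∘ₗ K.subtype = f

open LinearMap

theorem LinearMap.exists_comp_rangeRestrict_eq (p : A →ₗ[R] B) (f : A →ₗ[R] M)
    (h : ker p ≤ ker f) : ∃ F : range p →ₗ[R] M, F ∘ₗ p.rangeRestrict = f := by
  refine ⟨(ker p).liftQ f h ∘ₗ p.quotKerEquivRange.symm.toLinearMap, LinearMap.ext fun a => ?_⟩
  change (ker p).liftQ f h (p.quotKerEquivRange.symm ⟨p a, mem_range_self p a⟩) = f a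
  rw [quotKerEquivRange_symm_apply_image, Submodule.mkQ_apply, Submodule.liftQ_apply]

theorem LinearMap.linearMapsExtend_range_iff {C : Type*} [AddCommGroup C] [Module R C]
    (d₂ : C →ₗ[R] A) (d₁ : A →ₗ[R] B) (hd : range d₂ = ker d₁) :
    (range d₁).LinearMapsExtend M ↔
      ∀ f : A →ₗ[R] M, f ∘ₗ d₂ = 0 → ∃ g : B →ₗ[R] M, g ∘ₗ d₁ = f := by
  constructor
  · intro hext f hf
    obtain ⟨F, hF⟩ := d₁.exists_comp_rangeRestrict_eq f <| by
      rw [← hd, range_le_ker_iff]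
      exact hf
    obtain ⟨g, hg⟩ := hext F
    refine ⟨g, ?_⟩
    rw [← hF, ← hg, LinearMap.comp_assoc, subtype_comp_codRestrict]
  · intro h F
    have hd₁₂ : d₁.rangeRestrict ∘ₗ d₂ = 0 := by
      ext c
      exact hd.le ⟨c, rfl⟩
    obtain ⟨g, hg⟩ := h (F ∘ₗ d₁.rangeRestrict) (by rw [LinearMap.comp_assoc, hd₁₂, comp_zero])
    refine ⟨g, LinearMap.ext fun ⟨_, a, rfl⟩ => ?_⟩
    exact LinearMap.congr_fun hg a

theorem LinearMap.linearMapsExtend_ker_of_projective (π : A →ₗ[R] X) (π' : B →ₗ[R] X)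
    (hπ : Function.Surjective π) (hπ' : Function.Surjective π') [Module.Projective R A]
    [Module.Projective R B] (h : (ker π').LinearMapsExtend M) : (ker π).LinearMapsExtend M := by
  obtain ⟨s, hs⟩ := Module.projective_lifting_property π π' hπ
  obtain ⟨t, ht⟩ := Module.projective_lifting_property π' π hπ'
  have hs_ker : ∀ b ∈ ker π', s b ∈ ker π := fun b hb => by
    rwa [mem_ker, ← comp_apply, hs]
  have ht_ker : ∀ a ∈ ker π, t a ∈ ker π' := fun a ha => by
    rwa [mem_ker, ← comp_apply, ht]
  have hδ : ∀ a, (s ∘ₗ t - id : A →ₗ[R] A) a ∈ ker π := fun a => by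
    rw [mem_ker, sub_apply, map_sub, ← comp_apply, ← comp_assoc, hs, ht, id_apply, sub_self]
  intro f
  obtain ⟨G, hG⟩ := h (f ∘ₗ s.restrict hs_ker)
  refine ⟨G ∘ₗ t - f ∘ₗ (s ∘ₗ t - id).codRestrict (ker π) hδ, LinearMap.ext fun x => ?_⟩
  have hGt : G (t x) = f ⟨s (t x), hs_ker _ (ht_ker x x.2)⟩ :=
    LinearMap.congr_fun hG ⟨t x, ht_ker x x.2⟩
  simp only [comp_apply, sub_apply, Submodule.subtype_apply, hGt, ← map_sub]
  congr 1
  ext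
  simp

theorem LinearPMap.exists_le_mem_domain (m : B →ₗ.[R] M) (x : B) (y : M)
    (hy : ∀ (r : R) (hr : r • x ∈ m.domain), m ⟨r • x, hr⟩ = r • y) :
    ∃ m' : B →ₗ.[R] M, m ≤ m' ∧ x ∈ m'.domain := by
  have hann : ∀ r : R, r • x = 0 → (RingHom.id R) r • y = 0 := fun r hr => by
    rw [RingHom.id_apply, ← hy r (hr ▸ zero_mem _)]
    simp only [hr]
    exact m.map_zero
  set g := mkSpanSingleton' x y hann
  have hcompat : ∀ (d : m.domain) (z : g.domain), (d : B) = z → m d = g z := by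
    rintro ⟨_, hd⟩ ⟨z, hz⟩ (rfl : _ = z)
    obtain ⟨r, rfl⟩ := Submodule.mem_span_singleton.1 hz
    rw [mkSpanSingleton'_apply, RingHom.id_apply, ← hy]
  exact ⟨m.sup g hcompat, m.left_le_sup g hcompat,
    Submodule.mem_sup_right (Submodule.mem_span_singleton_self x)⟩

theorem LinearPMap.exists_extension_of_forall_exists_le (f : B →ₗ.[R] M)
    (hstep : ∀ m, f ≤ m → ∀ x, ∃ m' : B →ₗ.[R] M, m ≤ m' ∧ x ∈ m'.domain) :
    ∃ g : B →ₗ[R] M, ∀ x : f.domain, g x = f x := by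
  obtain ⟨m, -, hmax⟩ := zorn_le_nonempty₀ (Set.Ici f) (fun c hcf hc m hm =>
    ⟨LinearPMap.sSup c hc.directedOn, (hcf hm).trans (LinearPMap.le_sSup hc.directedOn hm),
      fun _ => LinearPMap.le_sSup hc.directedOn⟩) f (Set.mem_Ici.2 le_rfl)
  have htop : ∀ x, x ∈ m.domain := fun x => by
    obtain ⟨m', hmm', hx⟩ := hstep m hmax.1 x
    exact (hmax.2 (hmax.1.trans hmm') hmm').1 hx
  refine ⟨m.toFun ∘ₗ LinearMap.id.codRestrict m.domain htop, fun x => ?_⟩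
  exact (hmax.1.2 rfl).symm

theorem Submodule.linearMapsExtend_of_baer (𝓕 : Set (Ideal R)) (h𝓕 : IsUpperSet 𝓕)
    (hM : ∀ I ∈ 𝓕, I.LinearMapsExtend M) (K : Submodule R B)
    (hK : ∀ x : B, ∃ I ∈ 𝓕, ∀ a ∈ I, a • x ∈ K) : K.LinearMapsExtend M := by
  intro f
  obtain ⟨g, hg⟩ := LinearPMap.exists_extension_of_forall_exists_le ⟨K, f⟩ fun m hKm x => by
    obtain ⟨I, hI, hIx⟩ := hK x
    let J : Ideal R := m.domain.comap (LinearMap.toSpanSingleton R B x)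
    obtain ⟨H, hH⟩ := hM J (h𝓕 (fun a ha => hKm.1 (hIx a ha)) hI)
      (m.toFun ∘ₗ (LinearMap.toSpanSingleton R B x).restrict fun _ hr => hr)
    refine m.exists_le_mem_domain x (H 1) fun r hr => ?_
    rw [← map_smul, smul_eq_mul, mul_one]
    exact (LinearMap.congr_fun hH ⟨r, hr⟩).symm
  exact ⟨g, LinearMap.ext hg⟩

end LinearAlgebra

section Ext

universe u
variable {R : Type u} [CommRing R]

theorem CategoryTheory.ProjectiveResolution.subsingleton_ext_one_iff {X : ModuleCat.{u} R}
    (P : ProjectiveResolution X) (M : ModuleCat.{u} R) :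
    Subsingleton (((Ext R (ModuleCat.{u} R) 1).obj (Opposite.op X)).obj M) ↔
      ∀ f : P.complex.X 1 →ₗ[R] M, f ∘ₗ (P.complex.d 2 1).hom = 0 →
        ∃ g : P.complex.X 0 →ₗ[R] M, g ∘ₗ (P.complex.d 1 0).hom = f := by
  rw [← ModuleCat.isZero_iff_subsingleton, ((P.isoExt 1 M)).isZero_iff,
    ← HomologicalComplex.exactAt_iff_isZero_homology,
    HomologicalComplex.exactAt_iff' _ 0 1 2 (by simp) (by simp),
    ShortComplex.moduleCat_exact_iff]
  constructor
  · intro h f hf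
    obtain ⟨g, hg⟩ := h (ModuleCat.ofHom f) (ModuleCat.hom_ext hf)
    exact ⟨g.hom, congrArg ModuleCat.Hom.hom hg⟩
  · intro h f hf
    obtain ⟨g, hg⟩ := h f.hom (congrArg ModuleCat.Hom.hom hf)
    exact ⟨ModuleCat.ofHom g, ModuleCat.hom_ext hg⟩

theorem subsingleton_ext_one_iff_linearMapsExtend_ker {X : ModuleCat.{u} R} (M : ModuleCat.{u} R)
    {A : Type u} [AddCommGroup A] [Module R A] [Module.Projective R A] (π : A →ₗ[R] X)
    (hπ : Function.Surjective π) :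
    Subsingleton (((Ext R (ModuleCat.{u} R) 1).obj (Opposite.op X)).obj M) ↔
      (LinearMap.ker π).LinearMapsExtend M := by
  let P := ProjectiveResolution.of X
  have hP : Function.Surjective (P.π.f 0).hom := (ModuleCat.epi_iff_surjective _).1 inferInstance
  rw [P.subsingleton_ext_one_iff,
    ← LinearMap.linearMapsExtend_range_iff _ _ (P.exact_succ 0).moduleCat_range_eq_ker,
    P.exact₀.moduleCat_range_eq_ker]
  exact ⟨LinearMap.linearMapsExtend_ker_of_projective π _ hπ hP,
    LinearMap.linearMapsExtend_ker_of_projective _ π hP hπ⟩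

theorem Ideal.subsingleton_ext_one_quotient_iff (I : Ideal R) (M : ModuleCat.{u} R) :
    Subsingleton (((Ext R (ModuleCat.{u} R) 1).obj
      (Opposite.op (ModuleCat.of R (R ⧸ I)))).obj M) ↔ I.LinearMapsExtend M := by
  rw [subsingleton_ext_one_iff_linearMapsExtend_ker M I.mkQ I.mkQ_surjective, I.ker_mkQ]

end Ext

theorem isPhiTorsion_quotient {R : Type*} [CommRing R] {I : Ideal R} (hI : ¬ I ≤ nilradical R) :
    IsPhiTorsion R (R ⧸ I) := by
  intro x
  obtain ⟨r, rfl⟩ := Ideal.Quotient.mk_surjective x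
  exact ⟨I, hI, fun a ha => Ideal.Quotient.eq_zero_iff_mem.2 (I.mul_mem_right r ha)⟩

theorem stmt_3_general (R : Type u) [CommRing R]
    (M : ModuleCat.{u} R) :
    (∀ T : ModuleCat.{u} R, IsPhiTorsion R T →
        Subsingleton (((Ext R (ModuleCat.{u} R) 1).obj (Opposite.op T)).obj M)) ↔
      (∀ I : Ideal R, ¬ I ≤ nilradical R →
        Subsingleton (((Ext R (ModuleCat.{u} R) 1).obj
          (Opposite.op (ModuleCat.of R (R ⧸ I)))).obj M)) := by
  refine ⟨fun h I hI => h _ (isPhiTorsion_quotient hI), fun h T hT => ?_⟩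
  rw [subsingleton_ext_one_iff_linearMapsExtend_ker M _
    (Finsupp.linearCombination_id_surjective R T)]
  refine Submodule.linearMapsExtend_of_baer {I | ¬ I ≤ nilradical R}
    (fun _ _ hIJ hI hJ => hI (hIJ.trans hJ))
    (fun I hI => (I.subsingleton_ext_one_quotient_iff M).1 (h I hI)) _ fun x => ?_
  obtain ⟨I, hI, hIx⟩ := hT (Finsupp.linearCombination R id x)
  exact ⟨I, hI, fun a ha => by rw [LinearMap.mem_ker, map_smul, hIx a ha]⟩

/-- Over an NP-ring, `M` is nonnil-injective (`Ext¹(T,M) = 0` for all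
φ-torsion `T`) iff `Ext¹(R/I, M) = 0` for every nonnil ideal `I`. -/
theorem stmt_3 (R : Type u) [CommRing R] (hNP : (nilradical R).IsPrime)
    (M : ModuleCat.{u} R) :
    (∀ T : ModuleCat.{u} R, IsPhiTorsion R T →
        Subsingleton (((Ext R (ModuleCat.{u} R) 1).obj (Opposite.op T)).obj M)) ↔
      (∀ I : Ideal R, ¬ I ≤ nilradical R →
        Subsingleton (((Ext R (ModuleCat.{u} R) 1).obj
          (Opposite.op (ModuleCat.of R (R ⧸ I)))).obj M)) :=
  stmt_3_general R M
end

section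
/- Let R be an NP-ring and M an R-module. If M is φ-flat, then for every injective R-module E, the module Hom_R(M,E) is nonnil-injective. -/
/-!
Present `T` as `0 → K → F → T → 0` with `F` projective. Then `Ext¹(T, N) = 0` as soon as every
map `K → N` extends to `F`. For `N = Hom(M, E)` such maps are maps `K ⊗ M → E`, so since `E` is
injective it suffices that `K ⊗ M → F ⊗ M` be injective, i.e. that `Tor₁(T, M)` vanish when
computed from a resolution of `T`. `Tor` is defined by resolving `M`, and a diagram chase through
flat presentations of both modules shows that the two computations vanish together.
-/

open CategoryTheory

universe u

open TensorProduct LinearMap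

section TensorChase

variable {R : Type*} [CommRing R]

lemma LinearMap.lTensor_rTensor_comm_apply {M N P Q : Type*}
    [AddCommGroup M] [Module R M] [AddCommGroup N] [Module R N]
    [AddCommGroup P] [Module R P] [AddCommGroup Q] [Module R Q]
    (f : M →ₗ[R] P) (g : N →ₗ[R] Q) (x : M ⊗[R] N) :
    lTensor P g (rTensor N f x) = rTensor Q f (lTensor M g x) := by
  simp only [← LinearMap.comp_apply, lTensor_comp_rTensor, rTensor_comp_lTensor]

lemma lTensor_range_subtype_injective_of_ker_le_range {T X₂ X₁ X₀ : Type*}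
    [AddCommGroup T] [Module R T] [AddCommGroup X₂] [Module R X₂]
    [AddCommGroup X₁] [Module R X₁] [AddCommGroup X₀] [Module R X₀]
    {d₂ : X₂ →ₗ[R] X₁} {d₁ : X₁ →ₗ[R] X₀} (hd : d₁ ∘ₗ d₂ = 0)
    (hT : ker (lTensor T d₁) ≤ range (lTensor T d₂)) :
    Function.Injective (lTensor T (range d₁).subtype) := by
  rw [injective_iff_map_eq_zero]
  intro t ht
  obtain ⟨u, rfl⟩ := lTensor_surjective T d₁.surjective_rangeRestrict t
  have hu : lTensor T d₁ u = 0 := by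
    rwa [← LinearMap.comp_apply, ← lTensor_comp] at ht
  obtain ⟨v, rfl⟩ := hT hu
  have hd' : d₁.rangeRestrict ∘ₗ d₂ = 0 := by
    ext x; simpa using congr($hd x)
  rw [← LinearMap.comp_apply, ← lTensor_comp, hd', lTensor_zero, LinearMap.zero_apply]

/-- The balancing step for `Tor₁`: vanishing computed from a flat presentation
`0 → S → G → M → 0` of `M` gives vanishing computed from a presentation `0 → K → F → T → 0`
of `T`. -/
lemma rTensor_injective_of_lTensor_injective {K F T S G M : Type*}
    [AddCommGroup K] [Module R K] [AddCommGroup F] [Module R F]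
    [AddCommGroup T] [Module R T] [AddCommGroup S] [Module R S]
    [AddCommGroup G] [Module R G] [AddCommGroup M] [Module R M] [Module.Flat R G]
    {i : K →ₗ[R] F} {q : F →ₗ[R] T} {j : S →ₗ[R] G} {p : G →ₗ[R] M}
    (hi : Function.Injective i) (hiq : Function.Exact i q) (hq : Function.Surjective q)
    (hjp : Function.Exact j p) (hp : Function.Surjective p)
    (hj : Function.Injective (lTensor T j)) :
    Function.Injective (rTensor M i) := by
  rw [injective_iff_map_eq_zero]
  intro x hx
  obtain ⟨y, rfl⟩ := lTensor_surjective K hp x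
  obtain ⟨z, hz⟩ := (lTensor_exact F hjp hp (rTensor G i y)).mp <| by
    rwa [lTensor_rTensor_comm_apply]
  obtain ⟨w, rfl⟩ := (rTensor_exact S hiq hq z).mp <| hj <| by
    rw [map_zero, lTensor_rTensor_comm_apply, hz, ← LinearMap.comp_apply, ← rTensor_comp,
      hiq.linearMap_comp_eq_zero, rTensor_zero, LinearMap.zero_apply]
  have hy : y = lTensor K j w :=
    Module.Flat.rTensor_preserves_injective_linearMap i hi <| by
      rw [← hz, lTensor_rTensor_comm_apply]
  rw [hy, ← LinearMap.comp_apply, ← lTensor_comp, hjp.linearMap_comp_eq_zero, lTensor_zero,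
    LinearMap.zero_apply]

/-- `Hom(-, Hom(M, E))` is `Hom(- ⊗ M, E)`, so extending along `i` reduces to extending along
`i ⊗ M`. -/
lemma Module.Injective.exists_comp_eq_of_rTensor_injective {K F M E : Type u}
    [AddCommGroup K] [Module R K] [AddCommGroup F] [Module R F]
    [AddCommGroup M] [Module R M] [AddCommGroup E] [Module R E] (hE : Module.Injective R E)
    {i : K →ₗ[R] F} (hi : Function.Injective (rTensor M i)) (φ : K →ₗ[R] M →ₗ[R] E) :
    ∃ ψ : F →ₗ[R] M →ₗ[R] E, ψ ∘ₗ i = φ := by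
  obtain ⟨H, hH⟩ := hE.out (rTensor M i) hi (lift φ)
  exact ⟨curry H, by ext x m; simpa using hH (x ⊗ₜ m)⟩

end TensorChase

lemma Function.Exact.exists_comp_eq_of_comp_eq_zero {R M N P Q : Type*} [Ring R]
    [AddCommGroup M] [Module R M] [AddCommGroup N] [Module R N]
    [AddCommGroup P] [Module R P] [AddCommGroup Q] [Module R Q]
    {f : M →ₗ[R] N} {g : N →ₗ[R] P} (h : Function.Exact f g) (hg : Function.Surjective g)
    {φ : N →ₗ[R] Q} (hφ : φ ∘ₗ f = 0) : ∃ ψ : P →ₗ[R] Q, ψ ∘ₗ g = φ :=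
  ⟨(range f).liftQ φ (range_le_ker_iff.2 hφ) ∘ₗ
    (h.linearEquivOfSurjective hg).symm.toLinearMap, by ext x; simp⟩

namespace CategoryTheory.ProjectiveResolution

variable {R : Type u} [CommRing R]

section

variable {X : ModuleCat.{u} R} (P : ProjectiveResolution X)

lemma surjective_π_f_zero : Function.Surjective (P.π.f 0).hom :=
  (ModuleCat.epi_iff_surjective _).1 inferInstance

lemma exact_range_subtype_π_f_zero :
    Function.Exact (range (P.complex.d 1 0).hom).subtype (P.π.f 0).hom := by
  rw [LinearMap.exact_iff, Submodule.range_subtype]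
  exact ((ShortComplex.moduleCat_exact_iff_range_eq_ker _).1 P.exact₀).symm

lemma exact_d_rangeRestrict :
    Function.Exact (P.complex.d 2 1).hom (P.complex.d 1 0).hom.rangeRestrict := by
  rw [LinearMap.exact_iff, ker_rangeRestrict]
  exact ((ShortComplex.moduleCat_exact_iff_range_eq_ker _).1 (P.exact_succ 0)).symm

end

lemma ker_lTensor_le_range_of_subsingleton_tor {T M : ModuleCat.{u} R}
    (Q : ProjectiveResolution M) (hTor : Subsingleton (((Tor (ModuleCat.{u} R) 1).obj T).obj M)) :
    ker (lTensor T (Q.complex.d 1 0).hom) ≤ range (lTensor T (Q.complex.d 2 1).hom) := by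
  let TQ := (((MonoidalCategory.tensoringLeft _).obj T).mapHomologicalComplex _).obj Q.complex
  have hexact : TQ.ExactAt 1 := by
    rw [HomologicalComplex.exactAt_iff_isZero_homology, ModuleCat.isZero_iff_subsingleton]
    have : Subsingleton ((((MonoidalCategory.tensoringLeft _).obj T).leftDerived 1).obj M) := hTor
    exact (Q.isoLeftDerivedObj _ 1).symm.toLinearEquiv.toEquiv.subsingleton
  rwa [HomologicalComplex.exactAt_iff' TQ 2 1 0 (by simp) (by simp),
    ShortComplex.moduleCat_exact_iff] at hexact

lemma rTensor_range_subtype_injective_of_subsingleton_tor {T M : ModuleCat.{u} R}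
    (P : ProjectiveResolution T) (Q : ProjectiveResolution M)
    (hTor : Subsingleton (((Tor (ModuleCat.{u} R) 1).obj T).obj M)) :
    Function.Injective (rTensor M (range (P.complex.d 1 0).hom).subtype) :=
  rTensor_injective_of_lTensor_injective (Submodule.injective_subtype _)
    P.exact_range_subtype_π_f_zero P.surjective_π_f_zero
    Q.exact_range_subtype_π_f_zero Q.surjective_π_f_zero
    (lTensor_range_subtype_injective_of_ker_le_range
      congr(ModuleCat.Hom.hom $(Q.complex.d_comp_d 2 1 0))
      (ker_lTensor_le_range_of_subsingleton_tor Q hTor))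

lemma subsingleton_ext_one_of_forall_exists_comp_subtype_eq {T : ModuleCat.{u} R}
    (P : ProjectiveResolution T) (N : ModuleCat.{u} R)
    (h : ∀ φ : range (P.complex.d 1 0).hom →ₗ[R] N,
      ∃ ψ : P.complex.X 0 →ₗ[R] N, ψ ∘ₗ (range (P.complex.d 1 0).hom).subtype = φ) :
    Subsingleton (((Ext R (ModuleCat.{u} R) 1).obj (Opposite.op T)).obj N) := by
  rw [← ModuleCat.isZero_iff_subsingleton]
  refine Limits.IsZero.of_iso ?_ (P.isoExt 1 N)
  rw [← HomologicalComplex.exactAt_iff_isZero_homology,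
    HomologicalComplex.exactAt_iff' _ 0 1 2 (by simp) (by simp), ShortComplex.moduleCat_exact_iff]
  intro f hf
  obtain ⟨φ, hφ⟩ := P.exact_d_rangeRestrict.exists_comp_eq_of_comp_eq_zero
    (P.complex.d 1 0).hom.surjective_rangeRestrict (φ := f.hom) congr(ModuleCat.Hom.hom $hf)
  obtain ⟨ψ, rfl⟩ := h φ
  exact ⟨ModuleCat.ofHom ψ, ModuleCat.hom_ext hφ⟩

end CategoryTheory.ProjectiveResolution

theorem stmt_5_general (R : Type u) [CommRing R]
    (M : Type u) [AddCommGroup M] [Module R M]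
    (hM : ∀ T : ModuleCat.{u} R, IsPhiTorsion R T →
      Subsingleton (((Tor (ModuleCat.{u} R) 1).obj T).obj (ModuleCat.of R M))) :
    ∀ (E : Type u) [AddCommGroup E] [Module R E], Module.Injective R E →
      ∀ T : ModuleCat.{u} R, IsPhiTorsion R T →
        Subsingleton (((Ext R (ModuleCat.{u} R) 1).obj (Opposite.op T)).obj
          (ModuleCat.of R (M →ₗ[R] E))) := by
  intro E _ _ hE T hT
  obtain ⟨P⟩ : Nonempty (ProjectiveResolution T) := HasProjectiveResolution.out
  obtain ⟨Q⟩ : Nonempty (ProjectiveResolution (ModuleCat.of R M)) := HasProjectiveResolution.out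
  have hK := P.rTensor_range_subtype_injective_of_subsingleton_tor Q (hM T hT)
  refine P.subsingleton_ext_one_of_forall_exists_comp_subtype_eq _ fun φ => ?_
  exact hE.exists_comp_eq_of_rTensor_injective hK φ

/-- Over an NP-ring, if `M` is φ-flat then for every injective module `E`,
`Hom_R(M,E)` is nonnil-injective. -/
theorem stmt_5 (R : Type u) [CommRing R] (hNP : (nilradical R).IsPrime)
    (M : Type u) [AddCommGroup M] [Module R M]
    (hM : ∀ T : ModuleCat.{u} R, IsPhiTorsion R T →
      Subsingleton (((Tor (ModuleCat.{u} R) 1).obj T).obj (ModuleCat.of R M))) :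
    ∀ (E : Type u) [AddCommGroup E] [Module R E], Module.Injective R E →
      ∀ T : ModuleCat.{u} R, IsPhiTorsion R T →
        Subsingleton (((Ext R (ModuleCat.{u} R) 1).obj (Opposite.op T)).obj
          (ModuleCat.of R (M →ₗ[R] E))) :=
  stmt_5_general R M hM
end

section
/- Let R be a φ-ring and I a nonnil ideal of R. Then I·Nil(R) = Nil(R), and consequently I ⊗_R (R/Nil(R)) ≅ I/Nil(R) as R/Nil(R)-modules. -/
open TensorProduct

/-! For a prime `P` with `x ∉ P` and `P ⊆ (x)`, each `r x ∈ P` has `r ∈ P`, so `P = x P ⊆ I P`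
whenever `x ∈ I`. For `J = Nil(R)` this gives `J I = J ⊆ I`, so `J I = J ∩ I` and the general
isomorphism `I ⊗ R/J ≅ I/JI` becomes `I ⊗ R/J ≅ I/(J ∩ I)`. -/

namespace Ideal

variable {R : Type*} [CommRing R]

theorem IsPrime.mul_eq_right_of_le_span_singleton {P I : Ideal R} (hP : P.IsPrime) {x : R}
    (hxI : x ∈ I) (hxP : x ∉ P) (hle : P ≤ span {x}) : I * P = P := by
  refine le_antisymm mul_le_right fun n hn => ?_
  obtain ⟨r, rfl⟩ := mem_span_singleton'.mp (hle hn)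
  have hrP : r ∈ P := (hP.mem_or_mem hn).resolve_right hxP
  exact mul_comm x r ▸ mul_mem_mul hxI hrP

theorem smul_top_eq_comap_subtype_of_mul_eq {I J : Ideal R} (h : I * J = J) :
    (J • ⊤ : Submodule R I) = Submodule.comap I.subtype J := by
  apply Submodule.map_injective_of_injective I.injective_subtype
  have hJI : J ≤ I := h ▸ mul_le_left
  rw [Submodule.map_smul'', Submodule.map_top, Submodule.range_subtype,
    Submodule.map_comap_eq, Submodule.range_subtype, smul_eq_mul, mul_comm, h,
    inf_eq_right.mpr hJI]

noncomputable def tensorQuotEquivOfMulEq {I J : Ideal R} (h : I * J = J) :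
    (I ⊗[R] (R ⧸ J)) ≃ₗ[R] (I ⧸ Submodule.comap I.subtype J) :=
  (tensorQuotEquivQuotSMul I J).trans
    (Submodule.quotEquivOfEq _ _ (smul_top_eq_comap_subtype_of_mul_eq h))

end Ideal

/-- In a φ-ring, for a nonnil ideal `I`, `I · Nil(R) = Nil(R)` and
`I ⊗_R (R/Nil(R)) ≅ I/Nil(R)`. -/
theorem stmt_6 (R : Type u) [CommRing R]
    (hp : (nilradical R).IsPrime)
    (hdiv : ∀ x ∉ nilradical R, nilradical R < Ideal.span {x})
    (I : Ideal R) (hI : ¬ I ≤ nilradical R) :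
    I * nilradical R = nilradical R ∧
      Nonempty ((I ⊗[R] (R ⧸ nilradical R)) ≃ₗ[R]
        (I ⧸ (Submodule.comap I.subtype (nilradical R)))) := by
  obtain ⟨x, hxI, hxn⟩ := SetLike.not_le_iff_exists.mp hI
  have hmul : I * nilradical R = nilradical R :=
    hp.mul_eq_right_of_le_span_singleton hxI hxn (hdiv x hxn).le
  exact ⟨hmul, ⟨Ideal.tensorQuotEquivOfMulEq hmul⟩⟩
end

section
/- Let R be a φ-ring. If R is nonnil-Noetherian (every nonnil ideal is finitely generated), then every nonnil-FP-injective R-module is nonnil-injective. -/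
open CategoryTheory

theorem Ideal.finitePresentation_quotient_of_fg {R : Type*} [Ring R] {I : Ideal R} (hI : I.FG) :
    Module.FinitePresentation R (R ⧸ I) :=
  Module.finitePresentation_of_surjective I.mkQ I.mkQ_surjective (by rwa [Submodule.ker_mkQ])

theorem stmt_13_general (R : Type u) [CommRing R]
    (hnoeth : ∀ I : Ideal R, ¬ I ≤ nilradical R → I.FG) :
    ∀ M : ModuleCat.{u} R,
      (∀ T : ModuleCat.{u} R, Module.FinitePresentation R T → IsPhiTorsion R T →
        Subsingleton (((Ext R (ModuleCat.{u} R) 1).obj (Opposite.op T)).obj M)) →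
      ∀ I : Ideal R, ¬ I ≤ nilradical R →
        Subsingleton (((Ext R (ModuleCat.{u} R) 1).obj
          (Opposite.op (ModuleCat.of R (R ⧸ I)))).obj M) :=
  fun _ hM I hI =>
    hM _ (Ideal.finitePresentation_quotient_of_fg (hnoeth I hI)) (isPhiTorsion_quotient hI)

/-- Let `R` be a nonnil-Noetherian φ-ring (every nonnil ideal is finitely
generated). Then every nonnil-FP-injective `R`-module is nonnil-injective. -/
theorem stmt_13 (R : Type u) [CommRing R]
    (hp : (nilradical R).IsPrime)
    (hdiv : ∀ x ∉ nilradical R, nilradical R < Ideal.span {x})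
    (hnoeth : ∀ I : Ideal R, ¬ I ≤ nilradical R → I.FG) :
    ∀ M : ModuleCat.{u} R,
      (∀ T : ModuleCat.{u} R, Module.FinitePresentation R T → IsPhiTorsion R T →
        Subsingleton (((Ext R (ModuleCat.{u} R) 1).obj (Opposite.op T)).obj M)) →
      ∀ I : Ideal R, ¬ I ≤ nilradical R →
        Subsingleton (((Ext R (ModuleCat.{u} R) 1).obj
          (Opposite.op (ModuleCat.of R (R ⧸ I)))).obj M) :=
  stmt_13_general R hnoeth
end

section
/- Let R be a ZN-ring that is also an NP-ring, and E an R-module. Then E is nonnil-divisible (for every m ∈ E and every non-nilpotent a ∈ R there exists x ∈ E with ax = m) if and only if Ext¹_R(R/⟨a⟩, E) = 0 for every non-nilpotent element a of R. -/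
/-!
A non-zero-divisor `a` gives a projective resolution `0 → R --a--> R → R ⧸ (a) → 0`, so
`Ext¹(R ⧸ (a), E)` is the cokernel of `a • · : E → E`. In a ZN-ring every non-nilpotent
element is a non-zero-divisor, hence the vanishing of all these `Ext¹` is exactly
nonnil-divisibility.
-/

open CategoryTheory Limits ZeroObject nonZeroDivisors

universe u

noncomputable section

namespace CategoryTheory.ShortComplex

variable {C : Type*} [Category* C] [Abelian C] (S : ShortComplex C)

def twoTermX : ℕ → C
  | 0 => S.X₂
  | 1 => S.X₁
  | _ + 2 => 0

def twoTermD : ∀ n : ℕ, S.twoTermX (n + 1) ⟶ S.twoTermX n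
  | 0 => S.f
  | _ + 1 => 0

/-- The chain complex `⋯ ⟶ 0 ⟶ S.X₁ ⟶ S.X₂`, with `S.X₂` in degree `0`. -/
def twoTermComplex : ChainComplex C ℕ :=
  ChainComplex.of S.twoTermX S.twoTermD fun _ => zero_comp

lemma twoTermComplex_d_one_zero : S.twoTermComplex.d 1 0 = S.f :=
  ChainComplex.of_d S.twoTermX S.twoTermD 0

lemma twoTermComplex_d_succ (n : ℕ) : S.twoTermComplex.d (n + 2) (n + 1) = 0 :=
  ChainComplex.of_d _ _ (n + 1)

variable {S}

def ShortExact.projectiveResolution (hS : S.ShortExact) [Projective S.X₁] [Projective S.X₂] :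
    ProjectiveResolution S.X₃ where
  complex := S.twoTermComplex
  projective
    | 0 => inferInstanceAs (Projective S.X₂)
    | 1 => inferInstanceAs (Projective S.X₁)
    | _ + 2 => (isZero_zero C).projective
  π := (ChainComplex.toSingle₀Equiv _ _).symm
    ⟨S.g, by rw [twoTermComplex_d_one_zero]; exact S.zero⟩
  quasiIso := ⟨fun
    | 0 => by
      rw [ChainComplex.quasiIsoAt₀_iff, ShortComplex.quasiIso_iff_of_zeros' _ rfl rfl rfl]
      refine (exact_and_epi_g_iff_of_iso ?_).2 ⟨hS.exact, hS.epi_g⟩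
      exact isoMk (Iso.refl _) (Iso.refl _) (Iso.refl _)
        (by dsimp; erw [Category.id_comp, Category.comp_id]
            exact (twoTermComplex_d_one_zero S).symm)
        (by dsimp; erw [Category.id_comp, Category.comp_id]
            exact (ChainComplex.toSingle₀Equiv_symm_apply_f_zero
              (C := S.twoTermComplex) _ _).symm)
    | n + 1 => by
      rw [quasiIsoAt_iff_exactAt' (hL := ChainComplex.exactAt_succ_single_obj ..)]
      match n with
      | 0 =>
        rw [HomologicalComplex.exactAt_iff' _ 2 1 0 (by simp) (by simp),
          exact_iff_mono _ (twoTermComplex_d_succ S 0)]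
        have := hS.mono_f
        rwa [← twoTermComplex_d_one_zero] at this
      | n + 1 =>
        rw [HomologicalComplex.exactAt_iff]
        exact exact_of_isZero_X₂ _ (isZero_zero C)⟩

lemma ShortExact.isZero_ext_one_iff {R : Type*} [Ring R] [Linear R C] [EnoughProjectives C]
    (hS : S.ShortExact) [Projective S.X₁] [Projective S.X₂] (Y : C) :
    IsZero (((Ext R C 1).obj (Opposite.op S.X₃)).obj Y) ↔
      ∀ g : S.X₁ ⟶ Y, ∃ h : S.X₂ ⟶ Y, S.f ≫ h = g := by
  rw [(hS.projectiveResolution.isoExt 1 Y).isZero_iff,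
    ← HomologicalComplex.exactAt_iff_isZero_homology,
    HomologicalComplex.exactAt_iff' _ 0 1 2 (by simp) (by simp), ShortComplex.moduleCat_exact_iff]
  refine forall_congr' fun g => ?_
  have hg : (HomologicalComplex.sc' (hS.projectiveResolution.complex.linearYonedaObj R Y)
      0 1 2).g g = 0 :=
    (isZero_zero C).eq_of_src _ _
  simp only [hg, true_implies]
  refine exists_congr fun h => ?_
  change S.twoTermComplex.d 1 0 ≫ h = g ↔ _
  rw [twoTermComplex_d_one_zero]
  exact Iff.rfl

end CategoryTheory.ShortComplex

namespace ModuleCat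

variable {R : Type u} [CommRing R] {a : R}

variable (a) in
abbrev quotSpanSingletonShortComplex : ShortComplex (ModuleCat.{u} R) :=
  shortComplexOfCompEqZero (LinearMap.lsmul R R a) (Ideal.span {a}).mkQ (by ext; simp)

lemma shortExact_quotSpanSingletonShortComplex (ha : a ∈ R⁰) :
    (quotSpanSingletonShortComplex a).ShortExact :=
  shortComplex_shortExact _
    (fun r => by simp [Ideal.Quotient.eq_zero_iff_mem, Ideal.mem_span_singleton', mul_comm])
    (isRegular_iff_mem_nonZeroDivisors.2 ha).left (Submodule.mkQ_surjective _)

lemma forall_exists_lsmul_comp_eq_iff (E : ModuleCat.{u} R) :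
    (∀ g : of R R ⟶ E, ∃ h : of R R ⟶ E, ofHom (LinearMap.lsmul R R a) ≫ h = g) ↔
      Function.Surjective (a • · : E → E) := by
  refine ⟨fun h m => ?_, fun h g => ?_⟩
  · obtain ⟨φ, hφ⟩ := h (ofHom (LinearMap.toSpanSingleton R E m))
    exact ⟨φ 1, by simpa [← map_smul] using congr(($hφ).hom 1)⟩
  · obtain ⟨x, hx⟩ := h (g 1)
    refine ⟨ofHom (LinearMap.toSpanSingleton R E x), ?_⟩
    ext
    simp [hx]

theorem isZero_ext_one_quotSpanSingleton_iff (ha : a ∈ R⁰) (E : ModuleCat.{u} R) :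
    IsZero (((Ext R (ModuleCat.{u} R) 1).obj (Opposite.op (of R (R ⧸ Ideal.span {a})))).obj E) ↔
      Function.Surjective (a • · : E → E) :=
  ((shortExact_quotSpanSingletonShortComplex ha).isZero_ext_one_iff E).trans
    (forall_exists_lsmul_comp_eq_iff E)

end ModuleCat

end

theorem stmt_14_general (R : Type u) [CommRing R]
    (hZN : ∀ a : R, a ∈ nilradical R ↔ a ∉ nonZeroDivisors R)
    (E : ModuleCat.{u} R) :
    (∀ (m : E) (a : R), a ∉ nilradical R → ∃ x : E, a • x = m) ↔
      (∀ a : R, a ∉ nilradical R →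
        Subsingleton (((Ext R (ModuleCat.{u} R) 1).obj
          (Opposite.op (ModuleCat.of R (R ⧸ Ideal.span {a})))).obj E)) := by
  have hreg (a : R) (ha : a ∉ nilradical R) : a ∈ R⁰ := not_not.1 (mt (hZN a).2 ha)
  refine ⟨fun hdiv a ha => ?_, fun hext m a ha => ?_⟩
  · exact ModuleCat.isZero_iff_subsingleton.1 <|
      (ModuleCat.isZero_ext_one_quotSpanSingleton_iff (hreg a ha) E).2 fun m => hdiv m a ha
  · exact (ModuleCat.isZero_ext_one_quotSpanSingleton_iff (hreg a ha) E).1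
      (ModuleCat.isZero_iff_subsingleton.2 (hext a ha)) m

/-- Let `R` be a ZN-ring (zero-divisors = nilpotents) which is also an
NP-ring. Then an `R`-module `E` is nonnil-divisible iff `Ext¹_R(R/⟨a⟩, E) = 0` for every
non-nilpotent `a`. -/
theorem stmt_14 (R : Type u) [CommRing R]
    (hNP : (nilradical R).IsPrime)
    (hZN : ∀ a : R, a ∈ nilradical R ↔ a ∉ nonZeroDivisors R)
    (E : ModuleCat.{u} R) :
    (∀ (m : E) (a : R), a ∉ nilradical R → ∃ x : E, a • x = m) ↔
      (∀ a : R, a ∉ nilradical R →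
        Subsingleton (((Ext R (ModuleCat.{u} R) 1).obj
          (Opposite.op (ModuleCat.of R (R ⧸ Ideal.span {a})))).obj E)) :=
  stmt_14_general R hZN E
end

section
/- Let R be an NP-ring and E a nonnil-divisible R-module. Then for every prime ideal p of R, the localization E_p is a nonnil-divisible R_p-module. -/
theorem Localization.isNilpotent_mk {R : Type*} [CommRing R] {S : Submonoid R} {r : R}
    (hr : IsNilpotent r) (s : S) : IsNilpotent (Localization.mk r s) := by
  obtain ⟨n, hn⟩ := hr
  exact ⟨n, by rw [Localization.mk_pow, hn, Localization.mk_zero]⟩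

theorem LocalizedModule.surjective_mk_smul {R : Type*} [CommRing R] {S : Submonoid R}
    {E : Type*} [AddCommGroup E] [Module R E] {r : R}
    (hr : Function.Surjective (r • · : E → E)) (t : S) :
    Function.Surjective (Localization.mk r t • · : LocalizedModule S E → LocalizedModule S E) := by
  intro m
  induction m using LocalizedModule.induction_on with
  | h e s =>
    -- `r / t • x / s = e / s` as soon as `r • x = t • e`
    obtain ⟨x, hx : r • x = (t : R) • e⟩ := hr ((t : R) • e)
    refine ⟨LocalizedModule.mk x s, ?_⟩
    change _ • _ = _
    rw [LocalizedModule.mk_smul_mk, hx, LocalizedModule.mk_eq]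
    refine ⟨1, ?_⟩
    simp only [one_smul, Submonoid.smul_def, mul_smul]
    rw [smul_comm]

theorem stmt_15_general (R : Type u) [CommRing R]
    (E : Type u) [AddCommGroup E] [Module R E]
    (hE : ∀ (m : E) (a : R), a ∉ nilradical R → ∃ x : E, a • x = m)
    (p : Ideal R) [p.IsPrime] :
    ∀ (m : LocalizedModule p.primeCompl E) (a : Localization.AtPrime p),
      a ∉ nilradical (Localization.AtPrime p) →
      ∃ x : LocalizedModule p.primeCompl E, a • x = m := by
  intro m a ha
  induction a using Localization.induction_on with
  | H rt =>
    obtain ⟨r, t⟩ := rt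
    have hr : r ∉ nilradical R := fun hr ↦
      ha (mem_nilradical.mpr (Localization.isNilpotent_mk (mem_nilradical.mp hr) t))
    exact LocalizedModule.surjective_mk_smul (fun e ↦ hE e r hr) t m

/-- Let `R` be an NP-ring and `E` a nonnil-divisible `R`-module. Then for
every prime ideal `p`, the localization `E_p` is a nonnil-divisible `R_p`-module. -/
theorem stmt_15 (R : Type u) [CommRing R] (hNP : (nilradical R).IsPrime)
    (E : Type u) [AddCommGroup E] [Module R E]
    (hE : ∀ (m : E) (a : R), a ∉ nilradical R → ∃ x : E, a • x = m)
    (p : Ideal R) [p.IsPrime] :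
    ∀ (m : LocalizedModule p.primeCompl E) (a : Localization.AtPrime p),
      a ∉ nilradical (Localization.AtPrime p) →
      ∃ x : LocalizedModule p.primeCompl E, a • x = m :=
  stmt_15_general R E hE p
end

section
/- Let R be a discrete φ-chained ring (every nonnil ideal of R is principal, generated by a non-nilpotent element) and let E be a nonnil-divisible R-module. Then E is nonnil-injective. -/
/-!
A nonnil ideal is `I = (a)` with `a` not nilpotent. The quotient `R ⧸ (a)` has a projective
resolution beginning with `R --a·--> R → R ⧸ (a)`, so a degree-one cocycle of `Hom(-, E)` is just
a map `f : R → E`. Writing `f 1 = a • x`, which is possible since `E` is divisible by `a`, shows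
`f = (a·) ≫ (r ↦ r • x)`: every cocycle is a coboundary and `Ext¹(R ⧸ I, E) = 0`.
-/

open CategoryTheory Limits

universe u

namespace CategoryTheory.ProjectiveResolution

variable {R : Type*} [Ring R] {C : Type*} [Category* C] [Abelian C] [Linear R C]
  [EnoughProjectives C] {X : C}

theorem isZero_ext_one_of_forall_factors (P : ProjectiveResolution X) (Y : C)
    (h : ∀ f : P.complex.X 1 ⟶ Y, ∃ g : P.complex.X 0 ⟶ Y, P.complex.d 1 0 ≫ g = f) :
    IsZero (((Ext R C 1).obj (Opposite.op X)).obj Y) := by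
  refine IsZero.of_iso ?_ (P.isoExt 1 Y)
  rw [← HomologicalComplex.exactAt_iff_isZero_homology,
    HomologicalComplex.exactAt_iff' _ 0 1 2 (by simp) (by simp),
    ShortComplex.moduleCat_exact_iff]
  intro (f : P.complex.X 1 ⟶ Y) _
  obtain ⟨g, hg⟩ := h f
  exact ⟨g, hg⟩

end CategoryTheory.ProjectiveResolution

namespace ModuleCat

variable {R : Type u} [CommRing R] (a : R)

/-- `R ←(a·) R ← P₂ ← P₃ ← ⋯`, continued by projective covers of the successive kernels. -/
noncomputable def quotSpanSingletonComplex : ChainComplex (ModuleCat.{u} R) ℕ :=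
  ChainComplex.mk' (of R R) (of R R) (ofHom (LinearMap.mul R R a))
    (fun f => ⟨_, Projective.d f,
      (Category.assoc _ _ _).trans ((congrArg _ (kernel.condition f)).trans comp_zero)⟩)

lemma quotSpanSingletonComplex_d_one_zero :
    (quotSpanSingletonComplex a).d 1 0 = ofHom (LinearMap.mul R R a) := by
  simp [quotSpanSingletonComplex]

lemma quotSpanSingletonComplex_exactAt_succ (n : ℕ) :
    (quotSpanSingletonComplex a).ExactAt (n + 1) := by
  rw [HomologicalComplex.exactAt_iff' _ (n + 1 + 1) (n + 1) n (by simp) (by simp)]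
  dsimp [quotSpanSingletonComplex, HomologicalComplex.sc', HomologicalComplex.shortComplexFunctor',
    ChainComplex.mk', ChainComplex.mk]
  simp only [ChainComplex.of.d, dite_true, eqToHom_refl]
  cases n <;> exact exact_d_f _

instance quotSpanSingletonComplex_projective (n : ℕ) :
    Projective ((quotSpanSingletonComplex a).X n) := by
  obtain _ | _ | _ | n := n
  · exact inferInstanceAs (Projective (of R R))
  · exact inferInstanceAs (Projective (of R R))
  · exact Projective.projective_over _
  · exact Projective.projective_over _

lemma quotSpanSingletonComplex_d_one_zero_comp_mkQ :
    (quotSpanSingletonComplex a).d 1 0 ≫ ofHom (Ideal.span {a}).mkQ = 0 := by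
  rw [quotSpanSingletonComplex_d_one_zero]
  ext
  exact (Submodule.Quotient.mk_eq_zero _).2
    (Ideal.mul_mem_right 1 _ (Ideal.mem_span_singleton_self a))

lemma exact_quotSpanSingletonComplex_d_one_zero_mkQ :
    (ShortComplex.mk _ _ (quotSpanSingletonComplex_d_one_zero_comp_mkQ a)).Exact := by
  rw [ShortComplex.moduleCat_exact_iff]
  intro (x : R) hx
  obtain ⟨r, rfl⟩ := Ideal.mem_span_singleton.1 ((Submodule.Quotient.mk_eq_zero _).1 hx)
  exact ⟨r, by simp [quotSpanSingletonComplex_d_one_zero]; rfl⟩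

noncomputable def quotSpanSingletonResolution :
    ProjectiveResolution (of R (R ⧸ Ideal.span {a})) where
  complex := quotSpanSingletonComplex a
  π := (ChainComplex.toSingle₀Equiv _ _).symm
    ⟨ofHom (Ideal.span {a}).mkQ, quotSpanSingletonComplex_d_one_zero_comp_mkQ a⟩
  quasiIso := ⟨fun n => by
    cases n with
    | zero =>
      rw [ChainComplex.quasiIsoAt₀_iff, ShortComplex.quasiIso_iff_of_zeros' _ rfl rfl rfl]
      refine (ShortComplex.exact_and_epi_g_iff_of_iso ?_).2
        ⟨exact_quotSpanSingletonComplex_d_one_zero_mkQ a,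
          (epi_iff_surjective _).2 (Submodule.mkQ_surjective _)⟩
      exact ShortComplex.isoMk (Iso.refl _) (Iso.refl _) (Iso.refl _)
        ((Category.id_comp _).trans (Category.comp_id _).symm)
        ((Category.id_comp _).trans (Category.comp_id _).symm)
    | succ n =>
      rw [quasiIsoAt_iff_exactAt' _ _ (ChainComplex.exactAt_succ_single_obj _ _)]
      exact quotSpanSingletonComplex_exactAt_succ a n⟩

theorem isZero_ext_one_quotSpanSingleton (E : ModuleCat.{u} R)
    (hE : ∀ m : E, ∃ x : E, a • x = m) :
    IsZero (((Ext R (ModuleCat.{u} R) 1).obj (Opposite.op (of R (R ⧸ Ideal.span {a})))).obj E) := by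
  refine (quotSpanSingletonResolution a).isZero_ext_one_of_forall_factors E fun f => ?_
  obtain ⟨x, hx⟩ := hE (f (1 : R))
  refine ⟨ofHom (LinearMap.toSpanSingleton R E x), ?_⟩
  change (quotSpanSingletonComplex a).d 1 0 ≫ _ = f
  rw [quotSpanSingletonComplex_d_one_zero]
  ext
  change (a * 1) • x = f (1 : R)
  rwa [mul_one]

end ModuleCat

theorem stmt_16_general (R : Type u) [CommRing R]
    (hprin : ∀ I : Ideal R, ¬ I ≤ nilradical R →
      ∃ a ∉ nilradical R, I = Ideal.span {a})
    (E : ModuleCat.{u} R)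
    (hE : ∀ (m : E) (a : R), a ∉ nilradical R → ∃ x : E, a • x = m) :
    ∀ I : Ideal R, ¬ I ≤ nilradical R →
      Subsingleton (((Ext R (ModuleCat.{u} R) 1).obj
        (Opposite.op (ModuleCat.of R (R ⧸ I)))).obj E) := by
  intro I hI
  obtain ⟨a, ha, rfl⟩ := hprin I hI
  exact ModuleCat.subsingleton_of_isZero
    (ModuleCat.isZero_ext_one_quotSpanSingleton a E fun m => hE m a ha)

/-- Let `R` be a discrete φ-chained ring, i.e. a φ-ring in which every
nonnil ideal is principal generated by a non-nilpotent element. Then every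
nonnil-divisible `R`-module `E` is nonnil-injective. -/
theorem stmt_16 (R : Type u) [CommRing R]
    (hp : (nilradical R).IsPrime)
    (hdiv : ∀ x ∉ nilradical R, nilradical R < Ideal.span {x})
    (hprin : ∀ I : Ideal R, ¬ I ≤ nilradical R →
      ∃ a ∉ nilradical R, I = Ideal.span {a})
    (E : ModuleCat.{u} R)
    (hE : ∀ (m : E) (a : R), a ∉ nilradical R → ∃ x : E, a • x = m) :
    ∀ I : Ideal R, ¬ I ≤ nilradical R →
      Subsingleton (((Ext R (ModuleCat.{u} R) 1).obj
        (Opposite.op (ModuleCat.of R (R ⧸ I)))).obj E) :=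
  stmt_16_general R hprin E hE
end

section
/- Let R be an NP-ring, p a prime ideal of R, and M an R-module. Then M is φ-torsion over R if and only if M_p is φ-torsion over R_p. -/
theorem isPhiTorsion_iff_exists_not_isNilpotent {R : Type*} [CommRing R] {M : Type*}
    [AddCommGroup M] [Module R M] :
    IsPhiTorsion R M ↔ ∀ x : M, ∃ a : R, ¬IsNilpotent a ∧ a • x = 0 := by
  refine forall_congr' fun x => ⟨?_, ?_⟩
  · rintro ⟨I, hI, hann⟩
    obtain ⟨a, haI, ha⟩ := SetLike.not_le_iff_exists.mp hI
    exact ⟨a, fun h => ha (mem_nilradical.mpr h), hann a haI⟩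
  · rintro ⟨a, ha, hax⟩
    refine ⟨Ideal.span {a}, fun h => ha (mem_nilradical.mp (h (Ideal.mem_span_singleton_self a))),
      fun b hb => ?_⟩
    obtain ⟨c, rfl⟩ := Ideal.mem_span_singleton'.mp hb
    rw [mul_smul, hax, smul_zero]

section Localization

variable {R : Type*} [CommRing R] {S : Submonoid R} {Rₛ : Type*} [CommRing Rₛ] [Algebra R Rₛ]
  [IsLocalization S Rₛ]

theorem Submonoid.not_isNilpotent_of_mem (hS : (0 : R) ∉ S) {t : R} (ht : t ∈ S) :
    ¬IsNilpotent t := by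
  rintro ⟨k, hk⟩
  exact hS (hk ▸ pow_mem ht k)

variable (S Rₛ) in
theorem IsLocalization.not_isNilpotent_algebraMap (hNP : (nilradical R).IsPrime)
    (hS : (0 : R) ∉ S) {a : R} (ha : ¬IsNilpotent a) : ¬IsNilpotent (algebraMap R Rₛ a) := by
  rintro ⟨n, hn⟩
  rw [← map_pow, IsLocalization.map_eq_zero_iff S] at hn
  obtain ⟨t, ht⟩ := hn
  have htan : (t : R) * a ^ n ∈ nilradical R := ht ▸ (nilradical R).zero_mem
  rcases hNP.mem_or_mem htan with htnil | hanil
  · exact Submonoid.not_isNilpotent_of_mem hS t.2 (mem_nilradical.mp htnil)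
  · exact ha (mem_nilradical.mp hanil).of_pow

theorem IsLocalization.isNilpotent_mk' {x : R} (hx : IsNilpotent x) (s : S) :
    IsNilpotent (IsLocalization.mk' Rₛ x s) := by
  rw [IsLocalization.mk'_eq_mul_mk'_one, mul_comm]
  exact (Commute.all _ _).isNilpotent_mul_left (hx.map (algebraMap R Rₛ))

variable (S) {M M' : Type*} [AddCommGroup M] [Module R M] [AddCommGroup M'] [Module R M']
  [Module Rₛ M'] [IsScalarTower R Rₛ M']

theorem IsPhiTorsion.isLocalizedModule (f : M →ₗ[R] M') [IsLocalizedModule S f]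
    (hNP : (nilradical R).IsPrime) (hS : (0 : R) ∉ S) (h : IsPhiTorsion R M) :
    IsPhiTorsion Rₛ M' := by
  rw [isPhiTorsion_iff_exists_not_isNilpotent] at h ⊢
  intro x
  obtain ⟨⟨m, s⟩, rfl⟩ := IsLocalizedModule.mk'_surjective S f x
  obtain ⟨a, ha, ham⟩ := h m
  refine ⟨algebraMap R Rₛ a, IsLocalization.not_isNilpotent_algebraMap S Rₛ hNP hS ha, ?_⟩
  rw [algebraMap_smul, Function.uncurry_apply_pair, ← IsLocalizedModule.mk'_smul, ham,
    IsLocalizedModule.mk'_zero]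

theorem IsPhiTorsion.of_isLocalizedModule (f : M →ₗ[R] M') [IsLocalizedModule S f]
    (h : IsPhiTorsion Rₛ M') : IsPhiTorsion R M := by
  rw [isPhiTorsion_iff_exists_not_isNilpotent] at h ⊢
  intro m
  obtain ⟨b, hb, hbm⟩ := h (f m)
  obtain ⟨r, s, rfl⟩ := IsLocalization.exists_mk'_eq S b
  rw [← IsLocalizedModule.mk'_one S, IsLocalizedModule.mk'_smul_mk',
    IsLocalizedModule.mk'_eq_zero'] at hbm
  obtain ⟨u, hu⟩ := hbm
  refine ⟨u * r, fun hur => hb ?_, by rw [mul_smul, ← Submonoid.smul_def, hu]⟩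
  rw [← IsLocalization.mk'_cancel r s u, mul_comm r]
  exact IsLocalization.isNilpotent_mk' hur _

theorem isPhiTorsion_iff_of_isLocalizedModule (f : M →ₗ[R] M') [IsLocalizedModule S f]
    (hNP : (nilradical R).IsPrime) (hS : (0 : R) ∉ S) :
    IsPhiTorsion R M ↔ IsPhiTorsion Rₛ M' :=
  ⟨IsPhiTorsion.isLocalizedModule S f hNP hS, IsPhiTorsion.of_isLocalizedModule S f⟩

end Localization

/-- Let `R` be an NP-ring, `p` a prime ideal and `M` an `R`-module. Then
`M` is φ-torsion over `R` iff `M_p` is φ-torsion over `R_p`. -/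
theorem stmt_18 (R : Type u) [CommRing R] (hNP : (nilradical R).IsPrime)
    (p : Ideal R) [p.IsPrime]
    (M : Type u) [AddCommGroup M] [Module R M] :
    IsPhiTorsion R M ↔
      IsPhiTorsion (Localization.AtPrime p) (LocalizedModule p.primeCompl M) :=
  isPhiTorsion_iff_of_isLocalizedModule p.primeCompl (LocalizedModule.mkLinearMap p.primeCompl M)
    hNP (not_not_intro p.zero_mem)
end

section
/- Let R be a strongly φ-ring (a φ-ring with Z(R) = Nil(R)). If every finitely generated nonnil ideal of R is projective, then every nonnil ideal of R is flat, and consequently every ideal J of R is φ-flat (Tor₁^R(R/I, J) = 0 for every nonnil ideal I). -/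
/-!
A nonnil ideal `I` is the directed union of its finitely generated subideals containing a fixed
non-nilpotent element of `I`; these are nonnil, hence projective, hence flat, and a module in
which every finitely generated submodule lies in a flat submodule is flat.

For the `Tor` statement, flatness of `I` (and of `R`) makes `I ⊗ J → I ⊗ R → R ⊗ R` injective,
so `I ⊗ J → R ⊗ J` is injective. `Tor` is derived in its second variable, so it is computed
from a projective resolution `⋯ → P₁ → P₀ → J` with `Z = ker (P₀ → J)`: by right exactness of
`R ⧸ I ⊗ -`, exactness of `R ⧸ I ⊗ P` at `P₁` reduces to injectivity of
`R ⧸ I ⊗ Z → R ⧸ I ⊗ P₀`, which a diagram chase through `I ⊗ - → R ⊗ - → R ⧸ I ⊗ - → 0`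
deduces from the injectivity of `I ⊗ J → R ⊗ J`.
-/

open CategoryTheory TensorProduct LinearMap

section

variable {R : Type*} [CommRing R]

theorem Submodule.flat_of_forall_fg_le_flat {M : Type*} [AddCommGroup M] [Module R M]
    (P : Submodule R M)
    (h : ∀ N ≤ P, N.FG → ∃ N', N ≤ N' ∧ N' ≤ P ∧ Module.Flat R N') :
    Module.Flat R P := by
  rw [Module.Flat.iff_lTensor_injective']
  intro K
  rw [injective_iff_map_eq_zero]
  intro x hx
  obtain ⟨N, hNfg, hNP, y, rfl⟩ := Submodule.exists_fg_le_eq_rTensor_inclusion x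
  obtain ⟨N', hNN', hN'P, hN'⟩ := h N hNP hNfg
  have hy : rTensor K (N.inclusion hNP) y
      = rTensor K (N'.inclusion hN'P) (rTensor K (N.inclusion hNN') y) := by
    rw [← rTensor_comp_apply]; rfl
  have hinj : Function.Injective (rTensor R (N'.inclusion hN'P)) :=
    Module.Flat.rTensor_preserves_injective_linearMap _ (Submodule.inclusion_injective _)
  have hzero : lTensor N' K.subtype (rTensor K (N.inclusion hNN') y) = 0 := by
    apply hinj
    rw [map_zero, ← hx, hy, ← LinearMap.comp_apply, rTensor_comp_lTensor, ← lTensor_comp_rTensor,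
      LinearMap.comp_apply]
  rw [hy, Module.Flat.lTensor_preserves_injective_linearMap _ K.injective_subtype
    (hzero.trans (map_zero _).symm), map_zero]

theorem Ideal.flat_of_forall_fg_flat_of_not_le (p : Ideal R)
    (h : ∀ I : Ideal R, I.FG → ¬ I ≤ p → Module.Flat R I)
    (I : Ideal R) (hI : ¬ I ≤ p) : Module.Flat R I := by
  obtain ⟨c, hcI, hcp⟩ := SetLike.not_le_iff_exists.mp hI
  refine I.flat_of_forall_fg_le_flat fun N hNI hNfg => ⟨N ⊔ Ideal.span {c}, le_sup_left,
    sup_le hNI ((Ideal.span_singleton_le_iff_mem I).mpr hcI), h _ ?_ ?_⟩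
  · exact hNfg.sup (Submodule.fg_span_singleton c)
  · exact fun hle => hcp (hle (Ideal.mem_sup_right (Ideal.mem_span_singleton_self c)))

theorem Ideal.injective_rTensor_subtype_of_flat (I J : Ideal R) [Module.Flat R I] :
    Function.Injective (rTensor J I.subtype) := by
  have hinj : Function.Injective (rTensor R I.subtype ∘ₗ lTensor I J.subtype) :=
    (Module.Flat.rTensor_preserves_injective_linearMap _ I.injective_subtype).comp
      (Module.Flat.lTensor_preserves_injective_linearMap _ J.injective_subtype)
  rw [rTensor_comp_lTensor, ← lTensor_comp_rTensor, coe_comp] at hinj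
  exact hinj.of_comp

theorem injective_lTensor_quotient_subtype_of_injective_rTensor (I : Ideal R)
    {P M : Type*} [AddCommGroup P] [Module R P] [AddCommGroup M] [Module R M]
    (Z : Submodule R P) (π : P →ₗ[R] M) (hZπ : Function.Exact Z.subtype π)
    (hπ : Function.Surjective π) (hI : Function.Injective (rTensor M I.subtype)) :
    Function.Injective (lTensor (R ⧸ I) Z.subtype) := by
  rw [injective_iff_map_eq_zero]
  intro w hw
  obtain ⟨w, rfl⟩ := rTensor_surjective Z I.mkQ_surjective w
  have hIP : Function.Exact (rTensor P I.subtype) (rTensor P I.mkQ) :=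
    rTensor_exact P (LinearMap.exact_subtype_mkQ I) I.mkQ_surjective
  obtain ⟨t, ht⟩ := (hIP (lTensor R Z.subtype w)).mp <| by
    rwa [← LinearMap.comp_apply, lTensor_comp_rTensor, ← rTensor_comp_lTensor] at hw
  have hπt : lTensor I π t = 0 := by
    apply hI
    rw [map_zero, ← LinearMap.comp_apply, rTensor_comp_lTensor, ← lTensor_comp_rTensor,
      LinearMap.comp_apply, ht, ← lTensor_comp_apply, hZπ.linearMap_comp_eq_zero,
      lTensor_zero, LinearMap.zero_apply]
  obtain ⟨u, rfl⟩ := ((lTensor_exact I hZπ hπ) t).mp hπt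
  have hwu : w = rTensor Z I.subtype u := by
    apply Module.Flat.lTensor_preserves_injective_linearMap (M := R) _ Z.injective_subtype
    rw [← ht, ← LinearMap.comp_apply, ← LinearMap.comp_apply, lTensor_comp_rTensor,
      rTensor_comp_lTensor]
  rw [hwu, ← rTensor_comp_apply, (LinearMap.exact_subtype_mkQ I).linearMap_comp_eq_zero,
    rTensor_zero, LinearMap.zero_apply]

theorem exact_lTensor_of_injective_lTensor_range_subtype (Q : Type*) [AddCommGroup Q] [Module R Q]
    {P₂ P₁ P₀ : Type*} [AddCommGroup P₂] [Module R P₂] [AddCommGroup P₁] [Module R P₁]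
    [AddCommGroup P₀] [Module R P₀] {f : P₂ →ₗ[R] P₁} {g : P₁ →ₗ[R] P₀}
    (hfg : Function.Exact f g) (hg : Function.Injective (lTensor Q (range g).subtype)) :
    Function.Exact (lTensor Q f) (lTensor Q g) := by
  have hfg' : Function.Exact f g.rangeRestrict := by
    intro x
    rw [← hfg x, ← Subtype.coe_inj]
    rfl
  have hcomp : lTensor Q g = lTensor Q (range g).subtype ∘ₗ lTensor Q g.rangeRestrict := by
    rw [← lTensor_comp]
    rfl
  rw [hcomp, coe_comp]
  exact (lTensor_exact Q hfg' g.surjective_rangeRestrict).comp_injective _ hg (map_zero _)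

end

theorem CategoryTheory.ProjectiveResolution.isZero_leftDerived_obj_succ_of_exact
    {C D : Type*} [Category C] [Category D] [Abelian C] [Abelian D] [HasProjectiveResolutions C]
    (F : C ⥤ D) [F.Additive] {X : C} (P : ProjectiveResolution X) (n : ℕ)
    (h : (ShortComplex.mk (F.map (P.complex.d (n + 2) (n + 1))) (F.map (P.complex.d (n + 1) n))
      (by rw [← F.map_comp, P.complex.d_comp_d, F.map_zero])).Exact) :
    Limits.IsZero ((F.leftDerived (n + 1)).obj X) := by
  refine Limits.IsZero.of_iso ?_ (P.isoLeftDerivedObj F (n + 1))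
  rw [HomologicalComplex.homologyFunctor_obj, ← HomologicalComplex.exactAt_iff_isZero_homology,
    HomologicalComplex.exactAt_iff' _ (n + 2) (n + 1) n (by simp) (by simp)]
  exact h

universe u

theorem subsingleton_Tor_one_quotient_of_injective_rTensor {R : Type u} [CommRing R]
    (I : Ideal R) (M : Type u) [AddCommGroup M] [Module R M]
    (hI : Function.Injective (rTensor M I.subtype)) :
    Subsingleton (((Tor (ModuleCat.{u} R) 1).obj (ModuleCat.of R (R ⧸ I))).obj
      (ModuleCat.of R M)) := by
  let P := projectiveResolution (ModuleCat.of R M)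
  have hd : Function.Exact (P.complex.d 2 1).hom (P.complex.d 1 0).hom :=
    (ShortComplex.ShortExact.moduleCat_exact_iff_function_exact _).mp (P.exact_succ 0)
  have hπ : Function.Surjective (P.π.f 0).hom :=
    (ModuleCat.epi_iff_surjective _).mp inferInstance
  have hdπ : Function.Exact (range (P.complex.d 1 0).hom).subtype (P.π.f 0).hom := by
    rw [LinearMap.exact_iff, Submodule.range_subtype, ← LinearMap.exact_iff]
    exact (ShortComplex.ShortExact.moduleCat_exact_iff_function_exact _).mp
      (ShortComplex.exact_of_g_is_cokernel
        (ShortComplex.mk _ _ P.complex_d_comp_π_f_zero) P.isColimitCokernelCofork)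
  apply ModuleCat.subsingleton_of_isZero
  apply P.isZero_leftDerived_obj_succ_of_exact _ 0
  rw [ShortComplex.ShortExact.moduleCat_exact_iff_function_exact]
  exact exact_lTensor_of_injective_lTensor_range_subtype _ hd
    (injective_lTensor_quotient_subtype_of_injective_rTensor I _ _ hdπ hπ hI)

theorem stmt_19_general (R : Type u) [CommRing R]
    (h : ∀ I : Ideal R, I.FG → ¬ I ≤ nilradical R → Module.Projective R I) :
    (∀ I : Ideal R, ¬ I ≤ nilradical R → Module.Flat R I) ∧
      (∀ (J : Ideal R) (I : Ideal R), ¬ I ≤ nilradical R →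
        Subsingleton (((Tor (ModuleCat.{u} R) 1).obj
          (ModuleCat.of R (R ⧸ I))).obj (ModuleCat.of R J))) := by
  have flat : ∀ I : Ideal R, ¬ I ≤ nilradical R → Module.Flat R I :=
    (nilradical R).flat_of_forall_fg_flat_of_not_le fun I hfg hI =>
      have := h I hfg hI
      inferInstance
  refine ⟨flat, fun J I hI => ?_⟩
  have := flat I hI
  exact subsingleton_Tor_one_quotient_of_injective_rTensor I J
    (I.injective_rTensor_subtype_of_flat J)

/-- Let `R` be a strongly φ-ring (Nil(R) is a divided prime ideal and
`Z(R) = Nil(R)`). If every finitely generated nonnil ideal of `R` is projective, then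
every nonnil ideal of `R` is flat, and every ideal `J` of `R` is φ-flat, i.e.
`Tor₁^R(R/I, J) = 0` for every nonnil ideal `I`. -/
theorem stmt_19 (R : Type u) [CommRing R]
    (hp : (nilradical R).IsPrime)
    (hdiv : ∀ x ∉ nilradical R, nilradical R < Ideal.span {x})
    (hZN : ∀ a : R, a ∈ nilradical R ↔ a ∉ nonZeroDivisors R)
    (h : ∀ I : Ideal R, I.FG → ¬ I ≤ nilradical R → Module.Projective R I) :
    (∀ I : Ideal R, ¬ I ≤ nilradical R → Module.Flat R I) ∧
      (∀ (J : Ideal R) (I : Ideal R), ¬ I ≤ nilradical R →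
        Subsingleton (((Tor (ModuleCat.{u} R) 1).obj
          (ModuleCat.of R (R ⧸ I))).obj (ModuleCat.of R J))) :=
  stmt_19_general R h
end
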